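/- arXiv:1808.08162 — 3 statements merged into one kernel-verified Lean document; each statement's English description precedes it below -/
import Mathlib

section
/- Let S be a subsemigroup of ((0,∞),+), let u,v ∈ ℕ, and let A be a u×v matrix with rational entries that is image partition regular over S. Then I(A;S) is a subsemigroup of (βS,+); that is, if p,q ∈ I(A;S) then p+q ∈ I(A;S). -/
noncomputable section

/-- Addition of ultrafilters on ℝ: `B ∈ uAdd p q ↔ {x | {y | x + y ∈ B} ∈ q} ∈ p`. -/
def uAdd (p q : Ultrafilter ℝ) : Ultrafilter ℝ :=
  p.bind fun x => q.map fun y => x + y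

/-- `S` is a subsemigroup of `((0,∞),+)`. -/
def IsPosSubsemigroup (S : Set ℝ) : Prop :=
  S.Nonempty ∧ S ⊆ Set.Ioi 0 ∧ ∀ x ∈ S, ∀ y ∈ S, x + y ∈ S

/-- `0` is a limit point of `S`. -/
def DenseNearZero (S : Set ℝ) : Prop := ∀ ε > 0, ∃ x ∈ S, x < ε

/-- the `i`-th entry of `A x⃗`. -/
def mEntry {ι κ : Type} (A : ι → κ → ℚ) (x : κ → ℝ) (i : ι) : ℝ :=
  ∑ᶠ j, (A i j : ℝ) * x j

/-- admissible matrix: no zero row, finitely many nonzero entries in each row. -/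
def Admissible {ι κ : Type} (A : ι → κ → ℚ) : Prop :=
  (∀ i, A i ≠ 0) ∧ ∀ i, (Function.support (A i)).Finite

/-- `A` is image partition regular over `S`. -/
def IPRover {ι κ : Type} (S : Set ℝ) (A : ι → κ → ℚ) : Prop :=
  ∀ (k : ℕ) (c : ℝ → Fin (k + 1)), ∃ x : κ → ℝ, (∀ j, x j ∈ S) ∧
    ∃ m : Fin (k + 1), ∀ i, mEntry A x i ∈ S \ {0} ∧ c (mEntry A x i) = m

/-- `A` is image partition regular near zero over `S`. -/
def IPRNearZero {ι κ : Type} (S : Set ℝ) (A : ι → κ → ℚ) : Prop :=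
  ∀ (k : ℕ) (c : ℝ → Fin (k + 1)), ∀ δ > (0 : ℝ), ∃ x : κ → ℝ, (∀ j, x j ∈ S) ∧
    ∃ m : Fin (k + 1), ∀ i, mEntry A x i ∈ S \ {0} ∧
      mEntry A x i ∈ Set.Ioo 0 δ ∧ c (mEntry A x i) = m

/-- `I(A;S)`. -/
def ISet {ι κ : Type} (S : Set ℝ) (A : ι → κ → ℚ) : Set (Ultrafilter ℝ) :=
  {p | S ∈ p ∧ ∀ P ∈ p, ∃ x : κ → ℝ, (∀ j, x j ∈ S) ∧ ∀ i, mEntry A x i ∈ P}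

/-- `O⁺(S)`. -/
def Oplus (S : Set ℝ) : Set (Ultrafilter ℝ) :=
  {p | ∀ ε > (0 : ℝ), Set.Ioo 0 ε ∩ S ∈ p}

/-- `I₀(A;S)`. -/
def I0Set {ι κ : Type} (S : Set ℝ) (A : ι → κ → ℚ) : Set (Ultrafilter ℝ) :=
  {p | S ∈ p ∧ ∀ P ∈ p, ∀ ε > (0 : ℝ), ∃ x : κ → ℝ, (∀ j, x j ∈ S) ∧
      ∀ i, mEntry A x i ∈ P ∩ Set.Ioo 0 ε}

/-- multiplication of an ultrafilter by a real constant. -/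
def mulU (c : ℝ) (p : Ultrafilter ℝ) : Ultrafilter ℝ := p.map fun x => c * x

/-- `q·p = q-lim_{n} (n·p)` for `q ∈ βℕ`, `p ∈ βℝ`. -/
def actU (q : Ultrafilter ℕ) (p : Ultrafilter ℝ) : Ultrafilter ℝ :=
  q.bind fun n => p.map fun x => (n : ℝ) * x

/-- `I` is a two-sided ideal of `T ⊆ βℝ`. -/
def IsIdealIn (T I : Set (Ultrafilter ℝ)) : Prop :=
  I.Nonempty ∧ I ⊆ T ∧ ∀ p ∈ T, ∀ q ∈ I, uAdd p q ∈ I ∧ uAdd q p ∈ I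

/-- the smallest two-sided ideal of `T`. -/
def KK (T : Set (Ultrafilter ℝ)) : Set (Ultrafilter ℝ) :=
  ⋂₀ {I | IsIdealIn T I}

/-- `L` is a left ideal of `T`. -/
def IsLeftIdealIn (T L : Set (Ultrafilter ℝ)) : Prop :=
  L.Nonempty ∧ L ⊆ T ∧ ∀ p ∈ T, ∀ q ∈ L, uAdd p q ∈ L

/-- `L` is a minimal left ideal of `T`. -/
def IsMinLeftIdealIn (T L : Set (Ultrafilter ℝ)) : Prop :=
  IsLeftIdealIn T L ∧ ∀ L', IsLeftIdealIn T L' → L' ⊆ L → L' = L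

/-- `C ⊆ S` is central near zero. -/
def CentralNearZero (S C : Set ℝ) : Prop :=
  ∃ p : Ultrafilter ℝ, p ∈ KK (Oplus S) ∧ uAdd p p = p ∧ C ∈ p

/-- `C` is central* near zero: it belongs to every minimal idempotent of `O⁺(S)`. -/
def CentralStarNearZero (S C : Set ℝ) : Prop :=
  ∀ p : Ultrafilter ℝ, p ∈ KK (Oplus S) → uAdd p p = p → C ∈ p

/-- `C` is IP* near zero: it belongs to every idempotent of `O⁺(S)`. -/
def IPStarNearZero (S C : Set ℝ) : Prop :=
  ∀ p : Ultrafilter ℝ, p ∈ Oplus S → uAdd p p = p → C ∈ p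

/-- `A` is centrally image partition regular near zero over `S`. -/
def CIPRNearZero {ι κ : Type} (S : Set ℝ) (A : ι → κ → ℚ) : Prop :=
  ∀ C : Set ℝ, CentralNearZero S C →
    ∃ x : κ → ℝ, (∀ j, x j ∈ S) ∧ ∀ i, mEntry A x i ∈ C

/-- `T` is thick near zero in `S`. -/
def ThickNearZero (S T : Set ℝ) : Prop :=
  ∃ L : Set (Ultrafilter ℝ), IsLeftIdealIn (Oplus S) L ∧ ∀ p ∈ L, T ∈ p

/-- membership in the class `𝓜₀(S)`. -/
def MemM0 {ι κ : Type} (S : Set ℝ) (A : ι → κ → ℚ) : Prop :=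
  Admissible A ∧ ∀ T : Set ℝ, ThickNearZero S T →
    ∀ (k : ℕ) (c : ℝ → Fin (k + 1)), ∃ x : κ → ℝ, (∀ j, x j ∈ S) ∧
      ∃ m : Fin (k + 1), ∀ i, mEntry A x i ∈ T ∧ c (mEntry A x i) = m

/-- `A` is (finite) image partition regular (over ℕ). -/
def IPRoverNat {u v : ℕ} (A : Fin u → Fin v → ℚ) : Prop :=
  ∀ (k : ℕ) (c : ℕ → Fin (k + 1)), ∃ x : Fin v → ℕ, ∃ m : Fin (k + 1),
    ∀ i, ∃ n : ℕ, 0 < n ∧ (n : ℚ) = ∑ j, A i j * (x j : ℚ) ∧ c n = m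

/-- the compressed form of a finitely supported integer vector: delete the zeros,
then collapse equal consecutive entries. -/
def compress (r : ℕ → ℤ) (hr : (Function.support r).Finite) : List ℤ :=
  ((hr.toFinset.sort (· ≤ ·)).map r).destutter (· ≠ ·)

/-- `M` is the Milliken–Taylor matrix `MT(a⃗)`: its rows are exactly the finitely
supported integer vectors with compressed form `a⃗`. -/
def IsMTMatrix (a : List ℤ) (M : ℕ → ℕ → ℚ) : Prop :=
  (∀ i, ∃ (r : ℕ → ℤ) (hr : (Function.support r).Finite),
      (M i = fun j => (r j : ℚ)) ∧ compress r hr = a) ∧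
  ∀ (r : ℕ → ℤ) (hr : (Function.support r).Finite),
    compress r hr = a → ∃ i, M i = fun j => (r j : ℚ)

/-- the sum `f 0 + (f 1 + (⋯ + f k))` in `(βℝ, +)`. -/
def finSumU : ∀ {k : ℕ}, (Fin (k + 1) → Ultrafilter ℝ) → Ultrafilter ℝ
  | 0, f => f 0
  | _ + 1, f => uAdd (f 0) (finSumU fun i => f i.succ)

end

open Pointwise

theorem mem_uAdd {p q : Ultrafilter ℝ} {B : Set ℝ} :
    B ∈ uAdd p q ↔ {x | {y | x + y ∈ B} ∈ q} ∈ p :=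
  Iff.rfl

theorem add_mem_uAdd {p q : Ultrafilter ℝ} {s t : Set ℝ} (hs : s ∈ p) (ht : t ∈ q) :
    s + t ∈ uAdd p q :=
  mem_uAdd.2 <| Filter.mem_of_superset hs fun _ hx =>
    Filter.mem_of_superset ht fun _ hy => Set.add_mem_add hx hy

theorem mEntry_add {ι κ : Type} [Finite κ] (A : ι → κ → ℚ) (x y : κ → ℝ) (i : ι) :
    mEntry A (x + y) i = mEntry A x i + mEntry A y i := by
  simp only [mEntry, Pi.add_apply, mul_add]
  exact finsum_add_distrib (Set.toFinite _) (Set.toFinite _)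

/-- A solution for `p + q` is a solution `x⃗` for `p` plus a solution for `q` of the
finitely many translates `-(A x⃗)ᵢ + P`. -/
theorem uAdd_mem_ISet {ι κ : Type} [Finite ι] [Finite κ] {S : Set ℝ}
    (hS : ∀ x ∈ S, ∀ y ∈ S, x + y ∈ S) (A : ι → κ → ℚ) {p q : Ultrafilter ℝ}
    (hp : p ∈ ISet S A) (hq : q ∈ ISet S A) : uAdd p q ∈ ISet S A := by
  obtain ⟨hpS, hpA⟩ := hp
  obtain ⟨hqS, hqA⟩ := hq
  have hSS : S + S ⊆ S := by
    rintro _ ⟨x, hx, y, hy, rfl⟩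
    exact hS x hx y hy
  refine ⟨Filter.mem_of_superset (add_mem_uAdd hpS hqS) hSS, fun P hP => ?_⟩
  obtain ⟨x, hxS, hxP⟩ := hpA _ (mem_uAdd.1 hP)
  have htranslates : (⋂ i, {y | mEntry A x i + y ∈ P}) ∈ q :=
    Filter.iInter_mem.2 hxP
  obtain ⟨y, hyS, hyP⟩ := hqA _ htranslates
  refine ⟨x + y, fun j => hS _ (hxS j) _ (hyS j), fun i => ?_⟩
  rw [mEntry_add]
  exact Set.mem_iInter.1 (hyP i) i

theorem stmt1_general (S : Set ℝ) (hS : IsPosSubsemigroup S) (u v : ℕ)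
    (A : Fin u → Fin v → ℚ) :
    ∀ p ∈ ISet S A, ∀ q ∈ ISet S A, uAdd p q ∈ ISet S A :=
  fun _ hp _ hq => uAdd_mem_ISet hS.2.2 A hp hq

/-- If `A` is a finite matrix which is image partition regular over a
subsemigroup `S` of `((0,∞),+)`, then `I(A;S)` is a subsemigroup of `(βS,+)`. -/
theorem stmt1 (S : Set ℝ) (hS : IsPosSubsemigroup S) (u v : ℕ)
    (A : Fin u → Fin v → ℚ) (hA : IPRover S A) :
    ∀ p ∈ ISet S A, ∀ q ∈ ISet S A, uAdd p q ∈ ISet S A :=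
  stmt1_general S hS u v A
end

section
/- Let S be a dense subsemigroup of ((0,∞),+) and let A be an admissible matrix with rational entries. If q ∈ βℕ and p ∈ I₀(A;S), then q·p ∈ I₀(A;S). -/
/-!
`q·p` is the `q`-limit of the ultrafilters `n·p`, and `I₀(A;S)` is closed under such limits, since
a witness for a set `P ∈ q·p` can be taken from any single `n·p` containing `P`. Each `n·p` with
`n > 0` lies in `I₀(A;S)`: rescaling by `n` maps `S` into itself, commutes with `x⃗ ↦ Ax⃗`, and
moves `(0, ε/n)` onto `(0, ε)`.
-/

lemma IsPosSubsemigroup.natCast_mul_mem {S : Set ℝ} (hS : IsPosSubsemigroup S) {n : ℕ}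
    (hn : 0 < n) {x : ℝ} (hx : x ∈ S) : (n : ℝ) * x ∈ S := by
  induction n, hn using Nat.le_induction with
  | base => simpa using hx
  | succ k _ ih =>
    rw [Nat.cast_succ, add_one_mul]
    exact hS.2.2 _ ih _ hx

lemma mEntry_const_mul {ι κ : Type} (A : ι → κ → ℚ) (c : ℝ) (x : κ → ℝ) (i : ι) :
    mEntry A (fun j => c * x j) i = c * mEntry A x i := by
  simp only [mEntry, mul_finsum, mul_left_comm]

lemma mem_actU {q : Ultrafilter ℕ} {p : Ultrafilter ℝ} {B : Set ℝ} :
    B ∈ actU q p ↔ {n : ℕ | B ∈ mulU n p} ∈ q :=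
  Iff.rfl

lemma mulU_mem_I0Set {ι κ : Type} {S : Set ℝ} {A : ι → κ → ℚ} {p : Ultrafilter ℝ} {c : ℝ}
    (hc : 0 < c) (hcS : ∀ x ∈ S, c * x ∈ S) (hp : p ∈ I0Set S A) : mulU c p ∈ I0Set S A := by
  obtain ⟨hpS, hpA⟩ := hp
  refine ⟨p.mem_of_superset hpS hcS, fun P hP ε hε => ?_⟩
  obtain ⟨x, hxS, hxA⟩ := hpA _ hP (ε / c) (div_pos hε hc)
  refine ⟨fun j => c * x j, fun j => hcS _ (hxS j), fun i => ?_⟩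
  obtain ⟨hxP, hx0, hxε⟩ := hxA i
  rw [mEntry_const_mul]
  exact ⟨hxP, mul_pos hc hx0, (lt_div_iff₀' hc).mp hxε⟩

lemma actU_mem_I0Set {ι κ : Type} {S : Set ℝ} {A : ι → κ → ℚ} {q : Ultrafilter ℕ}
    {p : Ultrafilter ℝ} (h : ∀ᶠ n : ℕ in q, mulU n p ∈ I0Set S A) : actU q p ∈ I0Set S A := by
  refine ⟨mem_actU.mpr (h.mono fun n hn => hn.1), fun P hP ε hε => ?_⟩
  obtain ⟨n, hnP, hnI⟩ := (Filter.Eventually.and (mem_actU.mp hP) h).exists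
  exact hnI.2 P hnP ε hε

theorem stmt5_general {ι κ : Type} (S : Set ℝ)
    (hS : IsPosSubsemigroup S)
    (A : ι → κ → ℚ)
    (q : Ultrafilter ℕ) (hq : {n : ℕ | 0 < n} ∈ q)
    (p : Ultrafilter ℝ) (hp : p ∈ I0Set S A) :
    actU q p ∈ I0Set S A := by
  apply actU_mem_I0Set
  filter_upwards [hq] with n hn
  exact mulU_mem_I0Set (Nat.cast_pos.mpr hn) (fun x hx => hS.natCast_mul_mem hn hx) hp

/-- For a dense subsemigroup `S` of `((0,∞),+)` and an admissible
matrix `A`: if `q ∈ βℕ` and `p ∈ I₀(A;S)` then `q·p ∈ I₀(A;S)`. -/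
theorem stmt5 {ι κ : Type} [Countable ι] [Countable κ] (S : Set ℝ)
    (hS : IsPosSubsemigroup S) (hd : DenseNearZero S)
    (A : ι → κ → ℚ) (hA : Admissible A)
    (q : Ultrafilter ℕ) (hq : {n : ℕ | 0 < n} ∈ q)
    (p : Ultrafilter ℝ) (hp : p ∈ I0Set S A) :
    actU q p ∈ I0Set S A :=
  stmt5_general S hS A q hq p hp
end

section
/- Let S be a dense subsemigroup of ((0,∞),+), let u,v ∈ ℕ, and let D be a u×v image partition regular matrix. Let α and δ be positive ordinals, let A be an α×v matrix all of whose rows are rows of D, and let B be an α×δ matrix which is image partition regular near zero over S. If r ∈ I₀(A;S) and p ∈ I₀(B;S), then r + p ∈ I₀(C;S), where C = (A B) is the α×(v+δ) matrix obtained by placing A and B side by side. -/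
/-!
Let `P ∈ r + p`, i.e. `{x | P - x ∈ p} ∈ r`. Pick `x⃗` with every entry of `A x⃗` in that set and
below `ε/2`. Because `A` has only finitely many distinct rows (they are rows of the finite
matrix `D`), `A x⃗` has finitely many distinct entries `t`, so the finite intersection of the
sets `P - t` still lies in `p`; pick `y⃗` with every entry of `B y⃗` in it and below `ε/2`.
Then `(A B)(x⃗, y⃗) = A x⃗ + B y⃗` has all its entries in `P ∩ (0, ε)`.
-/

open Function

theorem finsum_sumElim {α β M : Type*} [AddCommMonoid M] {f : α → M} {g : β → M}
    (hf : (support f).Finite) (hg : (support g).Finite) :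
    ∑ᶠ j, Sum.elim f g j = (∑ᶠ a, f a) + ∑ᶠ b, g b := by
  rw [finsum_eq_sum f hf, finsum_eq_sum g hg, ← Finset.sum_sumElim,
    finsum_eq_sum_of_support_subset (s := hf.toFinset.disjSum hg.toFinset)]
  rintro (a | b) h
  · exact Finset.inl_mem_disjSum.2 (hf.mem_toFinset.2 h)
  · exact Finset.inr_mem_disjSum.2 (hg.mem_toFinset.2 h)

theorem mem_uAdd_iff {r p : Ultrafilter ℝ} {P : Set ℝ} :
    P ∈ uAdd r p ↔ {x | {y | x + y ∈ P} ∈ p} ∈ r :=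
  Iff.rfl

theorem mem_uAdd_of_add_mem {S : Set ℝ} (hS : ∀ x ∈ S, ∀ y ∈ S, x + y ∈ S)
    {r p : Ultrafilter ℝ} (hr : S ∈ r) (hp : S ∈ p) : S ∈ uAdd r p :=
  mem_uAdd_iff.2 <| Filter.mem_of_superset hr fun x hx =>
    Filter.mem_of_superset hp fun y hy => hS x hx y hy

theorem mEntry_sumElim {ι κ κ' : Type} {A : ι → κ → ℚ} {B : ι → κ' → ℚ}
    (hA : ∀ i, (support (A i)).Finite) (hB : ∀ i, (support (B i)).Finite)
    (x : κ → ℝ) (y : κ' → ℝ) (i : ι) :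
    mEntry (fun i => Sum.elim (A i) (B i)) (Sum.elim x y) i = mEntry A x i + mEntry B y i := by
  have hsplit : (fun j => ((Sum.elim (A i) (B i) j : ℚ) : ℝ) * Sum.elim x y j)
      = Sum.elim (fun j => (A i j : ℝ) * x j) (fun j => (B i j : ℝ) * y j) := by
    funext j; cases j <;> rfl
  unfold mEntry
  rw [hsplit, finsum_sumElim]
  · exact (hA i).subset fun j hj h0 => hj (by simp [h0])
  · exact (hB i).subset fun j hj h0 => hj (by simp [h0])

theorem finite_range_mEntry {ι κ : Type} {A : ι → κ → ℚ} (hA : (Set.range A).Finite)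
    (x : κ → ℝ) : (Set.range (mEntry A x)).Finite := by
  have : mEntry A x = (fun a : κ → ℚ => ∑ᶠ j, (a j : ℝ) * x j) ∘ A := rfl
  rw [this, Set.range_comp]
  exact hA.image _

theorem uAdd_mem_I0Set_sumElim {ι κ κ' : Type} {S : Set ℝ}
    (hS : ∀ x ∈ S, ∀ y ∈ S, x + y ∈ S) {A : ι → κ → ℚ} {B : ι → κ' → ℚ}
    (hArows : (Set.range A).Finite) (hA : ∀ i, (support (A i)).Finite)
    (hB : ∀ i, (support (B i)).Finite) {r p : Ultrafilter ℝ}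
    (hr : r ∈ I0Set S A) (hp : p ∈ I0Set S B) :
    uAdd r p ∈ I0Set S (fun i => Sum.elim (A i) (B i)) := by
  refine ⟨mem_uAdd_of_add_mem hS hr.1 hp.1, fun P hP ε hε => ?_⟩
  obtain ⟨x, hxS, hxP⟩ := hr.2 _ (mem_uAdd_iff.1 hP) (ε / 2) (half_pos hε)
  have hQ : (⋂ t ∈ Set.range (mEntry A x), {y | t + y ∈ P}) ∈ p := by
    refine (Filter.biInter_mem (finite_range_mEntry hArows x)).2 ?_
    rintro _ ⟨i, rfl⟩
    exact (hxP i).1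
  obtain ⟨y, hyS, hyQ⟩ := hp.2 _ hQ (ε / 2) (half_pos hε)
  refine ⟨Sum.elim x y, fun j => by cases j <;> simp [hxS, hyS], fun i => ?_⟩
  rw [mEntry_sumElim hA hB]
  have hxε := (hxP i).2
  have hyε := (hyQ i).2
  refine ⟨Set.mem_iInter₂.1 (hyQ i).1 _ ⟨i, rfl⟩, ?_, ?_⟩
  · linarith [hxε.1, hyε.1]
  · linarith [hxε.2, hyε.2]

theorem stmt14_general {ι κ : Type}
    (S : Set ℝ) (hS : IsPosSubsemigroup S)
    (u v : ℕ) (D : Fin u → Fin v → ℚ)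
    (A : ι → Fin v → ℚ) (hA : ∀ i, ∃ i', A i = D i')
    (B : ι → κ → ℚ) (hBadm : Admissible B)
    (r p : Ultrafilter ℝ) (hr : r ∈ I0Set S A) (hp : p ∈ I0Set S B) :
    uAdd r p ∈ I0Set S (fun i => Sum.elim (A i) (B i)) := by
  have hArows : (Set.range A).Finite := (Set.finite_range D).subset <| by
    rintro _ ⟨i, rfl⟩
    obtain ⟨i', hi'⟩ := hA i
    exact ⟨i', hi'.symm⟩
  exact uAdd_mem_I0Set_sumElim hS.2.2 hArows (fun _ => Set.toFinite _) hBadm.2 hr hp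

/-- Let `D` be a finite image partition regular matrix, `A` a matrix
all of whose rows are rows of `D`, and `B` a matrix image partition regular near zero
over `S` (with the same row index as `A`). If `r ∈ I₀(A;S)` and `p ∈ I₀(B;S)` then
`r + p ∈ I₀((A B);S)`. -/
theorem stmt14 {ι κ : Type} [Countable ι] [Countable κ] [Nonempty ι] [Nonempty κ]
    (S : Set ℝ) (hS : IsPosSubsemigroup S) (hd : DenseNearZero S)
    (u v : ℕ) (D : Fin u → Fin v → ℚ) (hD : IPRoverNat D)
    (A : ι → Fin v → ℚ) (hA : ∀ i, ∃ i', A i = D i')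
    (B : ι → κ → ℚ) (hBadm : Admissible B) (hB : IPRNearZero S B)
    (r p : Ultrafilter ℝ) (hr : r ∈ I0Set S A) (hp : p ∈ I0Set S B) :
    uAdd r p ∈ I0Set S (fun i => Sum.elim (A i) (B i)) :=
  stmt14_general S hS u v D A hA B hBadm r p hr hp
end
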